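/- Let G ∈ ℝ^{n×d} and let G_k = U_k Σ_k be the rank-k truncated SVD of G (keeping the k largest singular values and the corresponding left singular vectors). Define S_G(R) = ‖Gᵀ v_R‖²/(|R|+λ) for λ > 0. Then sup over subsets R ⊆ {1,…,n} of |S_G(R) − S_{G_k}(R)| ≤ σ_{k+1}(G)², where σ_{k+1}(G) is the (k+1)-st largest singular value of G. -/

import Mathlib

/-!
Put `w = Uᵀ v_R`. Since `V` is orthogonal, `‖Gᵀ v_R‖² = ‖Σᵀ w‖² = ∑_{j<d} s_j² w_j²`, while
`‖G_kᵀ v_R‖² = ∑_{j<k} s_j² w_j²`. The difference of the two numerators is the tail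
`∑_{k≤j<d} s_j² w_j² ≤ s_k² ‖w‖² = s_k² |R|`, and `|R| / (|R| + λ) ≤ 1`.
-/

open Matrix

/-- Spectral (operator) norm of a real matrix, as a map between Euclidean spaces. -/
noncomputable def opNorm {m n : Type*} [Fintype m] [Fintype n] [DecidableEq n]
    (A : Matrix m n ℝ) : ℝ :=
  ‖LinearMap.toContinuousLinearMap (Matrix.toEuclideanLin A)‖

/-- Indicator vector of a subset `R ⊆ {1,…,n}`. -/
def ind {n : ℕ} (R : Finset (Fin n)) : Fin n → ℝ := fun i => if i ∈ R then 1 else 0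

/-- Scoring function `S_G(R) = ‖Gᵀ v_R‖² / (|R| + λ)`. -/
noncomputable def score {n : ℕ} {d : Type*} [Fintype d]
    (G : Matrix (Fin n) d ℝ) (R : Finset (Fin n)) (lam : ℝ) : ℝ :=
  (∑ j, (Matrix.mulVec Gᵀ (ind R) j) ^ 2) / (R.card + lam)

open Finset

def zeroExtend {M : Type*} [Zero M] {n : ℕ} (w : Fin n → M) (j : ℕ) : M :=
  if h : j < n then w ⟨j, h⟩ else 0

section zeroExtend

variable {M : Type*} [Zero M] {n : ℕ} (w : Fin n → M)

@[simp]
lemma zeroExtend_val (i : Fin n) : zeroExtend w i = w i := by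
  simp [zeroExtend]

lemma zeroExtend_of_le {j : ℕ} (hj : n ≤ j) : zeroExtend w j = 0 := by
  simp [zeroExtend, not_lt.2 hj]

end zeroExtend

lemma sum_sq_zeroExtend_le {n : ℕ} (w : Fin n → ℝ) (S : Finset ℕ) :
    ∑ j ∈ S, zeroExtend w j ^ 2 ≤ ∑ i, w i ^ 2 :=
  calc ∑ j ∈ S, zeroExtend w j ^ 2
      ≤ ∑ j ∈ S ∪ range n, zeroExtend w j ^ 2 :=
        sum_le_sum_of_subset_of_nonneg subset_union_left fun _ _ _ => sq_nonneg _
    _ = ∑ j ∈ range n, zeroExtend w j ^ 2 :=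
        (sum_subset subset_union_right fun _ _ hj => by
          rw [zeroExtend_of_le w (not_lt.1 (mem_range.not.1 hj)), sq, zero_mul]).symm
    _ = ∑ i, w i ^ 2 := by
        rw [← Fin.sum_univ_eq_sum_range (fun j => zeroExtend w j ^ 2)]
        simp only [zeroExtend_val]

lemma sum_sq_mulVec_of_transpose_mul_self {α m l : Type*} [CommRing α] [Fintype m] [Fintype l]
    [DecidableEq l] {A : Matrix m l α} (hA : Aᵀ * A = 1) (x : l → α) :
    ∑ i, (A *ᵥ x) i ^ 2 = ∑ i, x i ^ 2 := by
  have h : (A *ᵥ x) ⬝ᵥ (A *ᵥ x) = x ⬝ᵥ x := by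
    rw [dotProduct_mulVec, ← mulVec_transpose, mulVec_mulVec, hA, one_mulVec]
  simpa [dotProduct, sq] using h

lemma sum_sq_ind {n : ℕ} (R : Finset (Fin n)) : ∑ i, ind R i ^ 2 = R.card := by
  simp [ind, apply_ite (· ^ 2)]

def rectDiag {α : Type*} [Zero α] {n d : ℕ} (s : ℕ → α) : Matrix (Fin n) (Fin d) α :=
  of fun i j => if (i : ℕ) = j then s i else 0

lemma rectDiag_transpose_mulVec {α : Type*} [NonUnitalNonAssocSemiring α] {n d : ℕ}
    (s : ℕ → α) (w : Fin n → α) (j : Fin d) :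
    ((rectDiag s)ᵀ *ᵥ w) j = s j * zeroExtend w j := by
  have h : ((rectDiag s)ᵀ *ᵥ w) j
      = ∑ m ∈ range n, if m = j then s m * zeroExtend w m else 0 := by
    rw [← Fin.sum_univ_eq_sum_range (fun m => if m = j then s m * zeroExtend w m else 0)]
    simp only [mulVec, dotProduct, rectDiag, transpose_apply, of_apply, ite_mul, zero_mul,
      zeroExtend_val]
  rw [h, sum_ite_eq']
  split_ifs with hj
  · rfl
  · rw [zeroExtend_of_le w (not_lt.1 (mem_range.not.1 hj)), mul_zero]

lemma sum_sq_svd_transpose_mulVec {α : Type*} [CommRing α] {n d : ℕ}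
    {U : Matrix (Fin n) (Fin n) α} {V : Matrix (Fin d) (Fin d) α} (hV : Vᵀ * V = 1)
    (s : ℕ → α) (v : Fin n → α) :
    ∑ j, ((U * (rectDiag s : Matrix (Fin n) (Fin d) α) * Vᵀ)ᵀ *ᵥ v) j ^ 2
      = ∑ j ∈ range d, (s j * zeroExtend (Uᵀ *ᵥ v) j) ^ 2 := by
  rw [transpose_mul, transpose_mul, transpose_transpose, ← mulVec_mulVec, ← mulVec_mulVec,
    sum_sq_mulVec_of_transpose_mul_self hV, ← Fin.sum_univ_eq_sum_range]
  simp only [rectDiag_transpose_mulVec]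

lemma sum_sq_truncSVD_transpose_mulVec {α : Type*} [CommRing α] {n k : ℕ} (hkn : k ≤ n)
    (U : Matrix (Fin n) (Fin n) α) (s : ℕ → α) (v : Fin n → α) :
    ∑ j, ((of fun i (j : Fin k) => U i (Fin.castLE hkn j) * s j)ᵀ *ᵥ v) j ^ 2
      = ∑ j ∈ range k, (s j * zeroExtend (Uᵀ *ᵥ v) j) ^ 2 := by
  rw [← Fin.sum_univ_eq_sum_range (fun j => (s j * zeroExtend (Uᵀ *ᵥ v) j) ^ 2)]
  refine sum_congr rfl fun j _ => ?_
  rw [show zeroExtend (Uᵀ *ᵥ v) j = (Uᵀ *ᵥ v) (Fin.castLE hkn j) from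
    zeroExtend_val _ (Fin.castLE hkn j)]
  simp only [mulVec, dotProduct, transpose_apply, of_apply, mul_sum]
  exact congrArg (· ^ 2) (sum_congr rfl fun _ _ => by ring)

lemma sum_Ico_sq_mul_le_of_antitone {s : ℕ → ℝ} (hs_nonneg : ∀ j, 0 ≤ s j) (hs : Antitone s)
    (p : ℕ → ℝ) (k d : ℕ) :
    ∑ j ∈ Ico k d, (s j * p j) ^ 2 ≤ s k ^ 2 * ∑ j ∈ Ico k d, p j ^ 2 := by
  rw [mul_sum]
  refine sum_le_sum fun j hj => ?_
  rw [mul_pow]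
  gcongr
  · exact hs_nonneg j
  · exact hs (mem_Ico.1 hj).1

lemma abs_div_add_le_of_le_mul {D a c lam : ℝ} (hD : 0 ≤ D) (hDa : D ≤ a * c) (ha : 0 ≤ a)
    (hc : 0 ≤ c) (hlam : 0 < lam) : |D / (c + lam)| ≤ a := by
  rw [abs_of_nonneg (by positivity), div_le_iff₀ (by positivity)]
  nlinarith

/-- Truncated SVD guarantee. `G = U Σ Vᵀ` is a full SVD (`U`, `V` orthogonal,
`Σ` rectangular diagonal with nonincreasing nonnegative entries `s`), and
`G_k = U_k Σ_k` keeps the `k` largest singular values. Then the scoring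
function changes by at most `σ_{k+1}(G)² = (s k)²` (0-indexed). -/
theorem stmt_5 {n d k : ℕ} (hkn : k < n) (hkd : k < d)
    (G : Matrix (Fin n) (Fin d) ℝ)
    (U : Matrix (Fin n) (Fin n) ℝ) (hU : U ∈ Matrix.orthogonalGroup (Fin n) ℝ)
    (V : Matrix (Fin d) (Fin d) ℝ) (hV : V ∈ Matrix.orthogonalGroup (Fin d) ℝ)
    (s : ℕ → ℝ) (hs_nonneg : ∀ j, 0 ≤ s j) (hs_mono : ∀ j j', j ≤ j' → s j' ≤ s j)
    (Smat : Matrix (Fin n) (Fin d) ℝ)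
    (hS : Smat = Matrix.of fun (i : Fin n) (j : Fin d) => if (i : ℕ) = (j : ℕ) then s (i : ℕ) else 0)
    (hG : G = U * Smat * Vᵀ)
    (Gk : Matrix (Fin n) (Fin k) ℝ)
    (hGk : Gk = Matrix.of fun i (j : Fin k) => U i (Fin.castLE hkn.le j) * s (j : ℕ))
    (lam : ℝ) (hlam : 0 < lam) (R : Finset (Fin n)) :
    |score G R lam - score Gk R lam| ≤ (s k) ^ 2 := by
  set w := Uᵀ *ᵥ ind R
  have hw : ∑ i, w i ^ 2 = R.card := by
    rw [sum_sq_mulVec_of_transpose_mul_self (by simpa using (mem_orthogonalGroup_iff _ _).1 hU),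
      sum_sq_ind]
  have hG' : G = U * (rectDiag s : Matrix (Fin n) (Fin d) ℝ) * Vᵀ := by
    rw [hG, hS]
    rfl
  have htail : ∑ j ∈ range d, (s j * zeroExtend w j) ^ 2
      - ∑ j ∈ range k, (s j * zeroExtend w j) ^ 2 = ∑ j ∈ Ico k d, (s j * zeroExtend w j) ^ 2 := by
    rw [← sum_range_add_sum_Ico _ hkd.le]
    ring
  rw [score, score, ← sub_div, hG', hGk,
    sum_sq_svd_transpose_mulVec ((mem_orthogonalGroup_iff' _ _).1 hV),
    sum_sq_truncSVD_transpose_mulVec, htail]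
  refine abs_div_add_le_of_le_mul (sum_nonneg fun _ _ => sq_nonneg _) ?_ (sq_nonneg _)
    R.card.cast_nonneg hlam
  calc ∑ j ∈ Ico k d, (s j * zeroExtend w j) ^ 2
      ≤ s k ^ 2 * ∑ j ∈ Ico k d, zeroExtend w j ^ 2 :=
        sum_Ico_sq_mul_le_of_antitone hs_nonneg (fun _ _ h => hs_mono _ _ h) _ k d
    _ ≤ s k ^ 2 * R.card := by
        rw [← hw]
        exact mul_le_mul_of_nonneg_left (sum_sq_zeroExtend_le w _) (sq_nonneg _)
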